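/- arXiv:0908.2790 — 7 statements merged into one kernel-verified Lean document; each statement's English description precedes it below -/
import Mathlib

section
/- In the tensor product ⨂_{j=0}^{n-1} M₂(ℂ) with normalized trace, let x = [[0,√2],[0,0]] and y = x*. For 1 ≤ i ≤ n−1 define aᵢ = x^{⊗(i+1)} ⊗ 1^{⊗(n−1−i)} and bᵢ = 1^{⊗(i+1)} ⊗ y ⊗ 1^{⊗(n−2−i)}. Then ‖aᵢ‖₂ = ‖bᵢ‖₂ = 1 for all i, ‖[aᵢ, b_j]‖₂ = 0 whenever i ≤ j, and ‖[aᵢ, b_j]‖₂ = 2 whenever i > j. -/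
/-!
Elementary tensors multiply, take adjoints and take traces factorwise, so the normalized
ℓ²-norm of an elementary tensor is the product of the normalized ℓ²-norms of its factors, and
`x`, `y`, `1` all have norm `1`. The factors of `aᵢ` and `b_j` commute except in slot `j + 1`,
where `aᵢ` carries `x` exactly when `j < i`; by multilinearity `[aᵢ, b_j]` is then the elementary
tensor with `[x, y] = diag(2, -2)`, of norm `2`, in that slot and norm-one factors elsewhere.
-/

open Matrix

/-- The elementary tensor `⨂_{j<n} f j` in `⨂_{j<n} M₂(ℂ) ≅ M_{2ⁿ}(ℂ)`, realized as a
matrix indexed by `Fin n → Fin 2`. -/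
noncomputable def elemTensor (n : ℕ) (f : Fin n → Matrix (Fin 2) (Fin 2) ℂ) :
    Matrix (Fin n → Fin 2) (Fin n → Fin 2) ℂ :=
  Matrix.of fun r c => ∏ j, f j (r j) (c j)

/-- ℓ²-norm on `M_{2ⁿ}(ℂ)` w.r.t. the normalized trace. -/
noncomputable def l2normPow (n : ℕ) (a : Matrix (Fin n → Fin 2) (Fin n → Fin 2) ℂ) : ℝ :=
  Real.sqrt ((Matrix.trace (aᴴ * a) / (2 ^ n : ℂ)).re)

lemma conjTranspose_of_fin_two (a b c d : ℂ) :
    (!![a, b; c, d])ᴴ = !![star a, star c; star b, star d] := by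
  ext i j; fin_cases i <;> fin_cases j <;> rfl

noncomputable def l2normM2 (A : Matrix (Fin 2) (Fin 2) ℂ) : ℝ :=
  Real.sqrt ((trace (Aᴴ * A) / 2).re)

lemma l2normM2_of (a b c d : ℂ) :
    l2normM2 !![a, b; c, d] =
      Real.sqrt
        ((Complex.normSq a + Complex.normSq b + Complex.normSq c + Complex.normSq d) / 2) := by
  simp [l2normM2, trace_fin_two, conjTranspose_apply, mul_apply, Fin.sum_univ_two,
    Complex.normSq_apply]
  ring_nf

lemma l2normM2_one : l2normM2 1 = 1 := by
  simp [one_fin_two, l2normM2_of]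

section elemTensor

variable {n : ℕ}

lemma elemTensor_mul (f g : Fin n → Matrix (Fin 2) (Fin 2) ℂ) :
    elemTensor n f * elemTensor n g = elemTensor n (fun j => f j * g j) := by
  ext r c
  simp only [elemTensor, mul_apply, of_apply, Finset.prod_univ_sum, Fintype.piFinset_univ,
    Finset.prod_mul_distrib]

lemma conjTranspose_elemTensor (f : Fin n → Matrix (Fin 2) (Fin 2) ℂ) :
    (elemTensor n f)ᴴ = elemTensor n (fun j => (f j)ᴴ) := by
  ext r c
  simp [elemTensor, conjTranspose_apply, star_prod]

lemma trace_elemTensor (f : Fin n → Matrix (Fin 2) (Fin 2) ℂ) :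
    (elemTensor n f).trace = ∏ j, (f j).trace := by
  simp only [Matrix.trace, diag, elemTensor, of_apply, Finset.prod_univ_sum,
    Fintype.piFinset_univ]

lemma elemTensor_update_sub (f : Fin n → Matrix (Fin 2) (Fin 2) ℂ)
    (k : Fin n) (A B : Matrix (Fin 2) (Fin 2) ℂ) :
    elemTensor n (Function.update f k A) - elemTensor n (Function.update f k B) =
      elemTensor n (Function.update f k (A - B)) := by
  ext r c
  have hrest (C : Matrix (Fin 2) (Fin 2) ℂ) :
      ∏ j ∈ {k}ᶜ, Function.update f k C j (r j) (c j) = ∏ j ∈ {k}ᶜ, f j (r j) (c j) :=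
    Finset.prod_congr rfl fun j hj => by rw [Function.update_of_ne (by simpa using hj)]
  simp only [elemTensor, Matrix.sub_apply, of_apply, Fintype.prod_eq_mul_prod_compl k,
    Function.update_self, hrest, sub_mul]

lemma commute_elemTensor {f g : Fin n → Matrix (Fin 2) (Fin 2) ℂ}
    (h : ∀ j, Commute (f j) (g j)) : Commute (elemTensor n f) (elemTensor n g) := by
  simp only [Commute, SemiconjBy, elemTensor_mul, fun j => (h j).eq]

lemma elemTensor_mul_sub_mul_eq_update {f g : Fin n → Matrix (Fin 2) (Fin 2) ℂ} (k : Fin n)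
    (h : ∀ j ≠ k, Commute (f j) (g j)) :
    elemTensor n f * elemTensor n g - elemTensor n g * elemTensor n f =
      elemTensor n (Function.update (fun j => f j * g j) k (f k * g k - g k * f k)) := by
  have hgf : (fun j => g j * f j) = Function.update (fun j => f j * g j) k (g k * f k) := by
    funext j
    rcases eq_or_ne j k with rfl | hj
    · simp
    · simp [Function.update_of_ne hj, (h j hj).eq]
  rw [elemTensor_mul, elemTensor_mul, hgf, ← elemTensor_update_sub, Function.update_eq_self]

open ComplexOrder in
lemma l2normPow_elemTensor (f : Fin n → Matrix (Fin 2) (Fin 2) ℂ) :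
    l2normPow n (elemTensor n f) = ∏ j, l2normM2 (f j) := by
  have hτ (A : Matrix (Fin 2) (Fin 2) ℂ) : 0 ≤ trace (Aᴴ * A) / 2 :=
    div_nonneg (posSemidef_conjTranspose_mul_self A).trace_nonneg zero_le_two
  have hpow : (2 : ℂ) ^ n = ∏ _j : Fin n, 2 := by simp
  rw [l2normPow, conjTranspose_elemTensor, elemTensor_mul, trace_elemTensor, hpow,
    ← Finset.prod_div_distrib,
    Finset.prod_congr rfl fun j _ =>
      Complex.eq_re_of_ofReal_le (r := 0) (by simpa using hτ (f j)),
    ← Complex.ofReal_prod, Complex.ofReal_re]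
  exact Real.sqrt_prod _ fun j _ => (Complex.nonneg_iff.mp (hτ (f j))).1

end elemTensor

theorem stmt1_general (n : ℕ)
    (x y : Matrix (Fin 2) (Fin 2) ℂ)
    (hx : x = !![0, (Real.sqrt 2 : ℂ); 0, 0]) (hy : y = xᴴ)
    (a b : ℕ → Matrix (Fin n → Fin 2) (Fin n → Fin 2) ℂ)
    (ha : ∀ i, a i = elemTensor n (fun k => if (k : ℕ) ≤ i then x else 1))
    (hb : ∀ i, b i = elemTensor n (fun k => if (k : ℕ) = i + 1 then y else 1)) :
    ∀ i j, 1 ≤ i → i ≤ n - 1 → 1 ≤ j → j ≤ n - 1 →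
      l2normPow n (a i) = 1 ∧ l2normPow n (b i) = 1 ∧
      (i ≤ j → l2normPow n (a i * b j - b j * a i) = 0) ∧
      (j < i → l2normPow n (a i * b j - b j * a i) = 2) := by
  have hy' : y = !![0, 0; (Real.sqrt 2 : ℂ), 0] := by
    rw [hy, hx, conjTranspose_of_fin_two]; simp
  have hnx : l2normM2 x = 1 := by simp [hx, l2normM2_of]
  have hny : l2normM2 y = 1 := by simp [hy', l2normM2_of]
  have hnxy : l2normM2 (x * y - y * x) = 2 := by
    simp [hx, hy', l2normM2_of]
  intro i j _ hi _ hj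
  refine ⟨?_, ?_, fun hij => ?_, fun hji => ?_⟩
  · rw [ha, l2normPow_elemTensor]
    exact Finset.prod_eq_one fun k _ => by split_ifs; exacts [hnx, l2normM2_one]
  · rw [hb, l2normPow_elemTensor]
    exact Finset.prod_eq_one fun k _ => by split_ifs; exacts [hny, l2normM2_one]
  · have hcomm : Commute (a i) (b j) := by
      rw [ha, hb]
      refine commute_elemTensor fun k => ?_
      split_ifs <;> first | omega | exact Commute.one_left _ | exact Commute.one_right _
    rw [hcomm.eq, sub_self]
    simp [l2normPow]
  · set k₀ : Fin n := ⟨j + 1, by omega⟩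
    rw [ha, hb, elemTensor_mul_sub_mul_eq_update k₀, l2normPow_elemTensor,
      Fintype.prod_eq_single k₀]
    · simp [k₀, Nat.succ_le_of_lt hji, hnxy]
    · intro k hk
      have hk' : (k : ℕ) ≠ j + 1 := fun h => hk (Fin.ext h)
      rw [Function.update_of_ne hk, if_neg hk', mul_one]
      split_ifs
      exacts [hnx, l2normM2_one]
    · intro k hk
      have hk' : (k : ℕ) ≠ j + 1 := fun h => hk (Fin.ext h)
      rw [if_neg hk']
      exact Commute.one_right _

theorem stmt1 (n : ℕ) (hn : 2 ≤ n)
    (x y : Matrix (Fin 2) (Fin 2) ℂ)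
    (hx : x = !![0, (Real.sqrt 2 : ℂ); 0, 0]) (hy : y = xᴴ)
    (a b : ℕ → Matrix (Fin n → Fin 2) (Fin n → Fin 2) ℂ)
    (ha : ∀ i, a i = elemTensor n (fun k => if (k : ℕ) ≤ i then x else 1))
    (hb : ∀ i, b i = elemTensor n (fun k => if (k : ℕ) = i + 1 then y else 1)) :
    ∀ i j, 1 ≤ i → i ≤ n - 1 → 1 ≤ j → j ≤ n - 1 →
      l2normPow n (a i) = 1 ∧ l2normPow n (b i) = 1 ∧
      (i ≤ j → l2normPow n (a i * b j - b j * a i) = 0) ∧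
      (j < i → l2normPow n (a i * b j - b j * a i) = 2) :=
  stmt1_general n x y hx hy a b ha hb
end

section
/- Every infinite compact Hausdorff space X admits, for every k ∈ ℕ, elements a₀, …, a_{k−1} of the unit ball of C(X) such that ‖aᵢ a_j − a_j‖ = 0 for i > j and ‖aᵢ a_j − a_j‖ = 1 for i < j; i.e., C(X) has the order property witnessed by g(x,y) = ‖xy − y‖. -/
/-!
Choose distinct points `p₀, …, p_{k-1}` and, by Tietze, a real function `f` with `f pᵢ = i`.
Let `aᵢ = ρ_{i+1} ∘ f`, where `ρ_c` is the ramp equal to `1` below `c - 1` and to `0` above `c`.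
For `j < i` the function `aᵢ` is `1` wherever `aⱼ` is nonzero, so `aᵢ aⱼ = aⱼ`; for `i < j`,
at `pⱼ` we have `aⱼ = 1` and `aᵢ = 0`, so `aᵢ aⱼ - aⱼ` takes the value `-1`.
-/

open Function Topology

theorem ContinuousMap.exists_apply_eq_of_injective {X ι : Type*} [TopologicalSpace X]
    [NormalSpace X] [T1Space X] [Finite ι] {p : ι → X} (hp : Injective p) (g : ι → ℝ) :
    ∃ f : C(X, ℝ), ∀ i, f (p i) = g i := by
  let : TopologicalSpace ι := ⊥
  have : DiscreteTopology ι := ⟨rfl⟩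
  have hpc : IsClosedEmbedding p := .of_continuous_injective_isClosedMap
    continuous_of_discreteTopology hp fun s _ ↦ (s.toFinite.image p).isClosed
  obtain ⟨f, hf⟩ := (⟨g, continuous_of_discreteTopology⟩ : C(ι, ℝ)).exists_extension' hpc
  exact ⟨f, congrFun hf⟩

def ramp (c t : ℝ) : ℝ := max 0 (min 1 (c - t))

lemma ramp_nonneg (c t : ℝ) : 0 ≤ ramp c t := le_max_left _ _

lemma ramp_le_one (c t : ℝ) : ramp c t ≤ 1 := max_le zero_le_one (min_le_left _ _)

lemma ramp_eq_one {c t : ℝ} (h : t ≤ c - 1) : ramp c t = 1 := by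
  unfold ramp; rw [min_eq_left (by linarith)]; simp

lemma ramp_eq_zero {c t : ℝ} (h : c ≤ t) : ramp c t = 0 := by
  unfold ramp; apply max_eq_left; exact min_le_of_right_le (by linarith)

lemma continuous_ramp (c : ℝ) : Continuous (ramp c) := by
  unfold ramp; fun_prop

lemma ramp_mul_ramp_of_add_one_le {c c' : ℝ} (h : c + 1 ≤ c') (t : ℝ) :
    ramp c' t * ramp c t = ramp c t := by
  rcases le_or_gt c t with hct | htc
  · simp [ramp_eq_zero hct]
  · rw [ramp_eq_one (by linarith), one_mul]

section RampMap

variable {X : Type*} [TopologicalSpace X]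

def rampMap (f : C(X, ℝ)) (c : ℝ) : C(X, ℂ) :=
  ⟨fun x ↦ (ramp c (f x) : ℂ), Complex.continuous_ofReal.comp ((continuous_ramp c).comp f.2)⟩

@[simp]
lemma rampMap_apply (f : C(X, ℝ)) (c : ℝ) (x : X) : rampMap f c x = (ramp c (f x) : ℂ) := rfl

lemma rampMap_mul_rampMap_of_add_one_le (f : C(X, ℝ)) {c c' : ℝ} (h : c + 1 ≤ c') :
    rampMap f c' * rampMap f c = rampMap f c := by
  ext x
  simp only [ContinuousMap.mul_apply, rampMap_apply, ← Complex.ofReal_mul,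
    ramp_mul_ramp_of_add_one_le h]

variable [CompactSpace X]

lemma norm_rampMap_le_one (f : C(X, ℝ)) (c : ℝ) : ‖rampMap f c‖ ≤ 1 :=
  (ContinuousMap.norm_le _ zero_le_one).mpr fun x ↦ by
    rw [rampMap_apply, Complex.norm_real, Real.norm_of_nonneg (ramp_nonneg c _)]
    exact ramp_le_one c _

lemma norm_rampMap_mul_sub_le_one (f : C(X, ℝ)) (c c' : ℝ) :
    ‖rampMap f c' * rampMap f c - rampMap f c‖ ≤ 1 :=
  (ContinuousMap.norm_le _ zero_le_one).mpr fun x ↦ by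
    simp only [ContinuousMap.sub_apply, ContinuousMap.mul_apply, rampMap_apply,
      ← Complex.ofReal_mul, ← Complex.ofReal_sub, Complex.norm_real, Real.norm_eq_abs]
    have := ramp_nonneg c (f x)
    have := ramp_nonneg c' (f x)
    have := ramp_le_one c (f x)
    have := ramp_le_one c' (f x)
    rw [abs_le]
    constructor <;> nlinarith

lemma one_le_norm_rampMap_mul_sub (f : C(X, ℝ)) {c c' : ℝ} {x : X} (hc' : c' ≤ f x)
    (hc : f x ≤ c - 1) : 1 ≤ ‖rampMap f c' * rampMap f c - rampMap f c‖ := by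
  have hx : (rampMap f c' * rampMap f c - rampMap f c) x = -1 := by
    simp [ramp_eq_zero hc', ramp_eq_one hc]
  simpa [hx] using ContinuousMap.norm_coe_le_norm (rampMap f c' * rampMap f c - rampMap f c) x

end RampMap

/-- `C(X)` for an infinite compact Hausdorff space `X` has the order property witnessed by
`g(x,y) = ‖xy − y‖`: for every `k` there are `a₀, …, a_{k−1}` in the unit ball with
`‖aᵢ a_j − a_j‖ = 0` for `i > j` and `‖aᵢ a_j − a_j‖ = 1` for `i < j`. -/
theorem stmt7 {X : Type*} [TopologicalSpace X] [CompactSpace X] [T2Space X] [Infinite X]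
    (k : ℕ) :
    ∃ a : Fin k → C(X, ℂ),
      (∀ i, ‖a i‖ ≤ 1) ∧
      (∀ i j, j < i → ‖a i * a j - a j‖ = 0) ∧
      (∀ i j, i < j → ‖a i * a j - a j‖ = 1) := by
  let p : Fin k ↪ X := Fin.valEmbedding.trans (Infinite.natEmbedding X)
  obtain ⟨f, hf⟩ := ContinuousMap.exists_apply_eq_of_injective p.injective (fun i ↦ (i : ℝ))
  refine ⟨fun i ↦ rampMap f (i + 1), fun i ↦ norm_rampMap_le_one f _, ?_, ?_⟩
  · intro i j hji
    have : (j : ℝ) + 1 + 1 ≤ i + 1 := by norm_cast; omega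
    rw [rampMap_mul_rampMap_of_add_one_le f this, sub_self, norm_zero]
  · intro i j hij
    refine (norm_rampMap_mul_sub_le_one f _ _).antisymm
      (one_le_norm_rampMap_mul_sub f (x := p j) ?_ ?_)
    · rw [hf]; norm_cast
    · rw [hf, add_sub_cancel_right]
end

section
/- Let X be a compact Hausdorff space containing a nontrivial convergent sequence (xₙ) with pairwise disjoint open neighborhoods Uₙ ∋ xₙ. Choose fₙ ∈ C(X, ℝ) with 0 ≤ fₙ ≤ 1/4, fₙ(xₙ) = 1/4, and supp(fₙ) ⊆ Uₙ. Set aₙ = exp(2πi·Σ_{j ≤ n} f_j) and bₙ = exp(2πi·fₙ), unitaries in C(X). Then the function g₀((a,b),(a',b')) = ‖1 − a b'‖ satisfies g₀((a_m,b_m),(aₙ,bₙ)) = |1 − i| if m < n and g₀((a_m,b_m),(aₙ,bₙ)) = 2 if m ≥ n. -/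
open scoped Real

private lemma aux_sq (s : ℝ) :
    ‖1 - Complex.exp ((s : ℂ) * Complex.I)‖ ^ 2 = 2 - 2 * Real.cos s := by
  rw [Complex.sq_norm, Complex.normSq_apply]
  simp only [Complex.sub_re, Complex.sub_im, Complex.one_re, Complex.one_im,
    Complex.exp_ofReal_mul_I_re, Complex.exp_ofReal_mul_I_im]
  nlinarith [Real.sin_sq_add_cos_sq s]

private lemma aux_abs_one_sub_I : ‖(1 - Complex.I : ℂ)‖ = Real.sqrt 2 := by
  rw [Complex.norm_def]
  norm_num [Complex.normSq_apply]

/-- With `aₙ = exp(2πi·Σ_{j≤n} f_j)` and `bₙ = exp(2πi·fₙ)` built from bump functions at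
the points of a nontrivial convergent sequence, `g₀((a_m,b_m),(aₙ,bₙ)) = ‖1 − a_m bₙ‖`
equals `|1 − i|` if `m < n` and `2` if `m ≥ n`. -/
theorem stmt8 {X : Type*} [TopologicalSpace X] [CompactSpace X] [T2Space X]
    (x : ℕ → X) (l : X) (hlim : Filter.Tendsto x Filter.atTop (nhds l))
    (hne : ∀ n, x n ≠ l)
    (U : ℕ → Set X) (hUopen : ∀ n, IsOpen (U n)) (hUmem : ∀ n, x n ∈ U n)
    (hUdisj : ∀ m n, m ≠ n → Disjoint (U m) (U n))
    (f : ℕ → C(X, ℝ))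
    (hf0 : ∀ n, 0 ≤ f n) (hf14 : ∀ n, ∀ t, f n t ≤ (1/4 : ℝ))
    (hfx : ∀ n, f n (x n) = 1/4)
    (hsupp : ∀ n, {t | f n t ≠ 0} ⊆ U n)
    (a b : ℕ → C(X, ℂ))
    (ha : ∀ m, ∀ t, a m t = Complex.exp (2 * π * Complex.I *
      ((∑ j ∈ Finset.range (m + 1), f j t : ℝ) : ℂ)))
    (hb : ∀ n, ∀ t, b n t = Complex.exp (2 * π * Complex.I * ((f n t : ℝ) : ℂ))) :
    ∀ m n, (m < n → ‖(1 : C(X, ℂ)) - a m * b n‖ = ‖(1 - Complex.I : ℂ)‖) ∧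
      (n ≤ m → ‖(1 : C(X, ℂ)) - a m * b n‖ = 2) := by
  -- pointwise nonnegativity of f
  have hf0' : ∀ j (t : X), 0 ≤ f j t := fun j t => (ContinuousMap.le_def.mp (hf0 j)) t
  -- disjointness of supports
  have hdisj : ∀ j k (t : X), j ≠ k → f j t ≠ 0 → f k t = 0 := by
    intro j k t hjk hj
    by_contra hk
    exact Set.disjoint_left.mp (hUdisj j k hjk) (hsupp j hj) (hsupp k hk)
  -- value of the difference at a point
  have hval : ∀ m n (t : X), ((1 : C(X, ℂ)) - a m * b n) t =
      1 - Complex.exp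
        (((2 * π * (∑ j ∈ Finset.range (m + 1), f j t + f n t) : ℝ) : ℂ) * Complex.I) := by
    intro m n t
    have : a m t * b n t = Complex.exp
        (((2 * π * (∑ j ∈ Finset.range (m + 1), f j t + f n t) : ℝ) : ℂ) * Complex.I) := by
      rw [ha, hb, ← Complex.exp_add]
      push_cast
      ring_nf
    simp [ContinuousMap.sub_apply, ContinuousMap.mul_apply, ContinuousMap.one_apply, this]
  -- f j (x n) = 0 for j ≠ n
  have hkey : ∀ n j, j ≠ n → f j (x n) = 0 := by
    intro n j hjn
    exact hdisj n j (x n) (Ne.symm hjn) (by rw [hfx]; norm_num)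
  intro m n
  set g : C(X, ℂ) := (1 : C(X, ℂ)) - a m * b n with hg
  constructor
  · -- case m < n
    intro hmn
    rw [aux_abs_one_sub_I]
    -- bound on the phase: 0 ≤ θ t ≤ 1/4
    have hθ : ∀ t : X, 0 ≤ ∑ j ∈ Finset.range (m + 1), f j t + f n t ∧
        ∑ j ∈ Finset.range (m + 1), f j t + f n t ≤ 1/4 := by
      intro t
      have hnn : 0 ≤ ∑ j ∈ Finset.range (m + 1), f j t :=
        Finset.sum_nonneg fun j _ => hf0' j t
      refine ⟨add_nonneg hnn (hf0' n t), ?_⟩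
      by_cases hn : f n t = 0
      · rw [hn, add_zero]
        by_cases hz : ∀ j ∈ Finset.range (m + 1), f j t = 0
        · rw [Finset.sum_eq_zero hz]; norm_num
        · push_neg at hz
          obtain ⟨j₀, hj₀mem, hj₀⟩ := hz
          rw [Finset.sum_eq_single_of_mem j₀ hj₀mem
            (fun k _ hk => hdisj j₀ k t (Ne.symm hk) hj₀)]
          exact hf14 j₀ t
      · have : ∑ j ∈ Finset.range (m + 1), f j t = 0 :=
          Finset.sum_eq_zero fun j hj => by
            have : j ≠ n := by
              have := Finset.mem_range.mp hj
              omega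
            exact hdisj n j t (Ne.symm this) hn
        rw [this, zero_add]
        exact hf14 n t
    apply le_antisymm
    · rw [ContinuousMap.norm_le g (Real.sqrt_nonneg 2)]
      intro t
      rw [hval m n t]
      set s : ℝ := 2 * π * (∑ j ∈ Finset.range (m + 1), f j t + f n t) with hs
      have hcos : 0 ≤ Real.cos s := by
        apply Real.cos_nonneg_of_mem_Icc
        have hπ := Real.pi_pos
        refine Set.mem_Icc.mpr ⟨?_, ?_⟩ <;> nlinarith [(hθ t).1, (hθ t).2]
      have h2 : ‖1 - Complex.exp ((s : ℂ) * Complex.I)‖ ^ 2 ≤ 2 := by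
        rw [aux_sq]; linarith
      have := norm_nonneg (1 - Complex.exp ((s : ℂ) * Complex.I))
      nlinarith [Real.sq_sqrt (by norm_num : (0:ℝ) ≤ 2), Real.sqrt_nonneg 2]
    · -- lower bound: evaluate at x n
      have hsum : ∑ j ∈ Finset.range (m + 1), f j (x n) + f n (x n) = 1/4 := by
        rw [Finset.sum_eq_zero fun j hj => hkey n j (by have := Finset.mem_range.mp hj; omega),
          hfx]
        norm_num
      have hgx : g (x n) = 1 - Complex.I := by
        rw [hval m n (x n), hsum]
        congr 1
        have h1 : ((2 * π * (1/4 : ℝ) : ℝ) : ℂ) = ((π/2 : ℝ) : ℂ) := by push_cast; ring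
        rw [h1, Complex.exp_mul_I, ← Complex.ofReal_cos, ← Complex.ofReal_sin,
          Real.cos_pi_div_two, Real.sin_pi_div_two]
        simp
      calc Real.sqrt 2 = ‖g (x n)‖ := by
            rw [hgx, aux_abs_one_sub_I]
        _ ≤ ‖g‖ := ContinuousMap.norm_coe_le_norm g (x n)
  · -- case n ≤ m
    intro hnm
    apply le_antisymm
    · rw [ContinuousMap.norm_le g (by norm_num : (0:ℝ) ≤ 2)]
      intro t
      rw [hval m n t]
      refine le_trans (norm_sub_le _ _) ?_
      rw [norm_one, Complex.norm_exp_ofReal_mul_I]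
      norm_num
    · have hsum : ∑ j ∈ Finset.range (m + 1), f j (x n) + f n (x n) = 1/2 := by
        rw [Finset.sum_eq_single_of_mem n (Finset.mem_range.mpr (by omega))
          (fun k _ hk => hkey n k hk), hfx]
        norm_num
      have hgx : g (x n) = 2 := by
        rw [hval m n (x n), hsum]
        have h1 : ((2 * π * (1/2 : ℝ) : ℝ) : ℂ) * Complex.I = ↑π * Complex.I := by
          push_cast; ring
        rw [h1, Complex.exp_pi_mul_I]
        norm_num
      calc (2:ℝ) = ‖g (x n)‖ := by rw [hgx]; simp
        _ ≤ ‖g‖ := ContinuousMap.norm_coe_le_norm g (x n)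
end

section
/- Every maximal abelian self-adjoint subalgebra of an infinite-dimensional C*-algebra is infinite-dimensional. -/
/-!
A finite-dimensional masa `B` is a reduced commutative finite-dimensional ℂ-algebra, hence
`B ≅ ℂⁿ` is spanned by projections `p₁, …, pₙ` with `∑ pᵢ = 1` and `b pᵢ ∈ ℂ pᵢ` for `b ∈ B`.
Maximality makes `B` its own commutant, so every corner `pᵢ A pᵢ` lies in `B` and equals `ℂ pᵢ`.
If `z ≠ 0` lies in `pᵢ A pⱼ`, the C⋆-identity gives `z z⋆ = a pᵢ` with `a ≠ 0`, and then
`a y = z (z⋆ y) ∈ ℂ z` for every `y ∈ pᵢ A pⱼ`. So all corners have dimension at most one and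
`A = ∑ pᵢ A pⱼ` is finite-dimensional.
-/

noncomputable def algEquivPiOfIsAlgClosed (k R : Type*) [Field k] [IsAlgClosed k] [CommRing R]
    [IsReduced R] [Algebra k R] [Module.Finite k R] : R ≃ₐ[k] (MaximalSpectrum R → k) :=
  haveI : IsArtinianRing R := IsArtinianRing.of_finite k R
  ((IsArtinianRing.equivPi R).restrictScalars k).trans <|
    AlgEquiv.piCongrRight fun I =>
      haveI : Module.Finite k (R ⧸ I.asIdeal) :=
        Module.Finite.of_surjective (Ideal.Quotient.mkₐ k I.asIdeal).toLinearMap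
          Ideal.Quotient.mk_surjective
      (AlgEquiv.ofBijective (Algebra.ofId k _)
        IsAlgClosed.algebraMap_bijective_of_isIntegral).symm

theorem exists_completeOrthogonalIdempotents_mul_eq_smul (k R : Type*) [Field k]
    [IsAlgClosed k] [CommRing R] [IsReduced R] [Algebra k R] [Module.Finite k R] :
    ∃ (n : ℕ) (e : Fin n → R), CompleteOrthogonalIdempotents e ∧
      ∀ b i, ∃ c : k, b * e i = c • e i := by
  have : IsArtinianRing R := IsArtinianRing.of_finite k R
  let := Fintype.ofFinite (MaximalSpectrum R)
  let φ : R ≃ₐ[k] (Fin _ → k) := (algEquivPiOfIsAlgClosed k R).trans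
    (AlgEquiv.piCongrLeft' k (fun _ => k) (Fintype.equivFin _))
  refine ⟨_, fun i => φ.symm (Pi.single i 1),
    (CompleteOrthogonalIdempotents.single fun _ => k).map φ.symm.toRingHom, fun b i => ⟨φ b i, ?_⟩⟩
  apply φ.injective
  ext j
  rcases eq_or_ne j i with rfl | hji <;> simp [*]

section CStarRing

variable {A : Type*} [NormedRing A] [StarRing A] [CStarRing A]

theorem IsSelfAdjoint.eq_zero_of_isNilpotent {a : A} (ha : IsSelfAdjoint a)
    (hn : IsNilpotent a) : a = 0 := by
  obtain ⟨n, hn⟩ := hn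
  have h : a ^ 2 ^ n = 0 := pow_eq_zero_of_le Nat.lt_two_pow_self.le hn
  simpa [h, eq_comm (a := (0 : NNReal))] using ha.nnnorm_pow_two_pow n

theorem IsStarNormal.eq_zero_of_isNilpotent {a : A} [IsStarNormal a] (hn : IsNilpotent a) :
    a = 0 := by
  rw [← CStarRing.star_mul_self_eq_zero_iff]
  exact (IsSelfAdjoint.star_mul_self a).eq_zero_of_isNilpotent
    (IsStarNormal.star_comm_self.isNilpotent_mul_left hn)

theorem finiteDimensional_range_mulLeftRight {k : Type*} [Field k] [Algebra k A] {p q : A}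
    (hp : IsStarProjection p) (hq : IsStarProjection q)
    (hpc : ∀ x, ∃ c : k, p * x * p = c • p) (hqc : ∀ x, ∃ c : k, q * x * q = c • q) :
    FiniteDimensional k (LinearMap.range (LinearMap.mulLeftRight k (p, q))) := by
  by_cases hbot : LinearMap.range (LinearMap.mulLeftRight k (p, q)) = ⊥
  · rw [hbot]; infer_instance
  obtain ⟨_, ⟨x, rfl⟩, hz0⟩ := Submodule.exists_mem_ne_zero_of_ne_bot hbot
  set z := LinearMap.mulLeftRight k (p, q) x
  have hz : z = p * x * q := rfl
  obtain ⟨a, ha⟩ := hpc (x * q * star x)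
  have hzz : z * star z = a • p := by
    rw [← ha, hz, star_mul, star_mul, hp.isSelfAdjoint.star_eq, hq.isSelfAdjoint.star_eq]
    simp only [mul_assoc]
    rw [← mul_assoc q q, hq.isIdempotentElem.eq]
  have ha0 : a ≠ 0 := by
    rintro rfl
    exact hz0 (CStarRing.mul_star_self_eq_zero_iff z |>.1 (by rw [hzz, zero_smul]))
  refine Submodule.finiteDimensional_of_le (S₂ := k ∙ z) ?_
  rintro _ ⟨y, rfl⟩
  obtain ⟨c, hc⟩ := hqc (star x * p * y)
  have key : a • (p * y * q) = c • z := calc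
    a • (p * y * q) = (z * star z) * (p * y * q) := by
      rw [hzz, smul_mul_assoc, ← mul_assoc, ← mul_assoc, hp.isIdempotentElem.eq]
    _ = z * (q * (star x * p * y) * q) := by
      rw [hz, star_mul, star_mul, hp.isSelfAdjoint.star_eq, hq.isSelfAdjoint.star_eq]
      simp only [mul_assoc]
      rw [← mul_assoc p p, hp.isIdempotentElem.eq]
    _ = c • z := by
      rw [hc, mul_smul_comm, hz, mul_assoc, hq.isIdempotentElem.eq]
  rw [Submodule.mem_span_singleton]
  refine ⟨a⁻¹ * c, ?_⟩
  rw [mul_smul, ← key, smul_smul, inv_mul_cancel₀ ha0, one_smul, LinearMap.mulLeftRight_apply]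

end CStarRing

section MaximalCommutative

open scoped ComplexStarModule

variable {A : Type*} [Ring A] [StarRing A] [Algebra ℂ A] [StarModule ℂ A]
  {B : StarSubalgebra ℂ A}

theorem StarSubalgebra.mem_of_isSelfAdjoint_of_maximal_comm
    (habel : ∀ x ∈ B, ∀ y ∈ B, x * y = y * x)
    (hmax : ∀ C : StarSubalgebra ℂ A, B ≤ C → (∀ x ∈ C, ∀ y ∈ C, x * y = y * x) → C = B)
    {a : A} (ha : IsSelfAdjoint a) (hcomm : ∀ b ∈ B, b * a = a * b) : a ∈ B := by
  have hs : ∀ x ∈ insert a (B : Set A), ∀ y ∈ insert a (B : Set A), x * y = y * x := by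
    rintro x (rfl | hx) y (rfl | hy)
    · rfl
    · exact (hcomm y hy).symm
    · exact hcomm x hx
    · exact habel x hx y hy
  have hs_star : ∀ x ∈ insert a (B : Set A), star x ∈ insert a (B : Set A) := by
    rintro x (rfl | hx)
    · exact Or.inl ha.star_eq
    · exact Or.inr (star_mem hx)
  have := StarAlgebra.isMulCommutative_adjoin ℂ hs fun x hx y hy => hs x hx _ (hs_star y hy)
  have hC := hmax (StarAlgebra.adjoin ℂ (insert a (B : Set A)))
    (fun x hx => StarAlgebra.subset_adjoin ℂ _ (Or.inr hx))
    (fun x hx y hy => setLike_mul_comm hx hy)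
  exact hC ▸ StarAlgebra.subset_adjoin ℂ _ (Set.mem_insert a _)

theorem StarSubalgebra.centralizer_subset_of_maximal_comm
    (habel : ∀ x ∈ B, ∀ y ∈ B, x * y = y * x)
    (hmax : ∀ C : StarSubalgebra ℂ A, B ≤ C → (∀ x ∈ C, ∀ y ∈ C, x * y = y * x) → C = B) :
    (B : Set A).centralizer ⊆ B := by
  intro a ha
  have hC : a ∈ StarSubalgebra.centralizer ℂ (B : Set A) := by
    rw [StarSubalgebra.mem_centralizer_iff]
    exact fun b hb => ⟨ha b hb, ha _ (star_mem hb)⟩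
  have hsa : ∀ x ∈ StarSubalgebra.centralizer ℂ (B : Set A), IsSelfAdjoint x → x ∈ B :=
    fun x hx hx_sa => mem_of_isSelfAdjoint_of_maximal_comm habel hmax hx_sa
      fun b hb => ((StarSubalgebra.mem_centralizer_iff ℂ).1 hx b hb).1
  rw [← realPart_add_I_smul_imaginaryPart a]
  refine add_mem (hsa _ ?_ (ℜ a).2) (B.smul_mem (hsa _ ?_ (ℑ a).2) _)
  · rw [realPart_apply_coe, ← algebraMap_smul ℂ]
    exact SMulMemClass.smul_mem _ (add_mem hC (star_mem hC))
  · rw [imaginaryPart_apply_coe, ← algebraMap_smul ℂ (2⁻¹ : ℝ)]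
    exact SMulMemClass.smul_mem _ (SMulMemClass.smul_mem _ (sub_mem hC (star_mem hC)))

end MaximalCommutative

theorem exists_mul_mul_eq_smul_of_centralizer_subset {k A : Type*} [Field k] [Ring A]
    [Algebra k A] {s : Set A} (hs : s.centralizer ⊆ s) {p : A} (hp : IsIdempotentElem p)
    (hcomm : ∀ b ∈ s, Commute b p) (hscalar : ∀ b ∈ s, ∃ c : k, b * p = c • p) (x : A) :
    ∃ c : k, p * x * p = c • p := by
  have hmem : p * x * p ∈ s := hs fun b hb => by
    obtain ⟨c, hc⟩ := hscalar b hb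
    calc b * (p * x * p) = c • (p * x * p) := by
          rw [← mul_assoc, ← mul_assoc, hc, smul_mul_assoc, smul_mul_assoc]
      _ = p * x * p * b := by
          rw [mul_assoc (p * x), ← (hcomm b hb).eq, hc, mul_smul_comm]
  obtain ⟨c, hc⟩ := hscalar _ hmem
  exact ⟨c, by rw [← hc, mul_assoc _ p, hp.eq]⟩

theorem finiteDimensional_of_corners {k A : Type*} [Field k] [Ring A] [Algebra k A]
    {ι : Type*} [Fintype ι] (p : ι → A) (hp : ∑ i, p i = 1)
    (hfin : ∀ i j, FiniteDimensional k (LinearMap.range (LinearMap.mulLeftRight k (p i, p j)))) :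
    FiniteDimensional k A := by
  have htop : ⨆ i, ⨆ j, LinearMap.range (LinearMap.mulLeftRight k (p i, p j)) = ⊤ := by
    refine eq_top_iff.2 fun x _ => ?_
    have hx : x = ∑ i, ∑ j, p i * x * p j := by
      simp only [← Finset.mul_sum, ← Finset.sum_mul, hp, one_mul, mul_one]
    rw [hx]
    exact Submodule.sum_mem _ fun i _ => Submodule.sum_mem _ fun j _ =>
      Submodule.mem_iSup_of_mem i (Submodule.mem_iSup_of_mem j ⟨x, rfl⟩)
  have := Submodule.finiteDimensional_iSup fun i =>
    ⨆ j, LinearMap.range (LinearMap.mulLeftRight k (p i, p j))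
  rw [htop] at this
  exact Submodule.topEquiv.finiteDimensional

/-- Every maximal abelian self-adjoint subalgebra of an infinite-dimensional C*-algebra
is infinite-dimensional. -/
theorem stmt9 {A : Type*} [NormedRing A] [StarRing A] [CStarRing A] [NormedAlgebra ℂ A]
    [StarModule ℂ A] [CompleteSpace A]
    (hA : ¬ FiniteDimensional ℂ A)
    (B : StarSubalgebra ℂ A)
    (habel : ∀ x ∈ B, ∀ y ∈ B, x * y = y * x)
    (hmax : ∀ C : StarSubalgebra ℂ A, B ≤ C → (∀ x ∈ C, ∀ y ∈ C, x * y = y * x) → C = B) :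
    ¬ FiniteDimensional ℂ B := by
  intro hB
  let : CommRing B := { B.toRing with mul_comm := fun x y => Subtype.ext (habel _ x.2 _ y.2) }
  have hnormal : ∀ x ∈ B, IsStarNormal x := fun x hx => ⟨habel _ (star_mem hx) _ hx⟩
  have : IsReduced B := ⟨fun x hx =>
    have := hnormal x x.2
    Subtype.ext (IsStarNormal.eq_zero_of_isNilpotent (hx.map B.subtype))⟩
  obtain ⟨n, e, he, he_smul⟩ := exists_completeOrthogonalIdempotents_mul_eq_smul ℂ B
  let p : Fin n → A := fun i => e i
  let : CStarAlgebra A := { }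
  have hp : ∀ i, IsStarProjection (p i) := fun i =>
    isStarProjection_iff_isIdempotentElem_and_isStarNormal.2
      ⟨(he.idem i).map B.subtype, hnormal _ (e i).2⟩
  have hcorner : ∀ i x, ∃ c : ℂ, p i * x * p i = c • p i := fun i =>
    exists_mul_mul_eq_smul_of_centralizer_subset
      (StarSubalgebra.centralizer_subset_of_maximal_comm habel hmax) (hp i).isIdempotentElem
      (fun b hb => habel _ hb _ (e i).2)
      (fun b hb => (he_smul ⟨b, hb⟩ i).imp fun c hc => congr_arg B.subtype hc)
  exact hA <| finiteDimensional_of_corners p (by simpa using congr_arg B.subtype he.complete)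
    fun i j => finiteDimensional_range_mulLeftRight (hp i) (hp j) (hcorner i) (hcorner j)
end

section
/- Let (B, ν) be a probability measure algebra containing a stochastically independent family (x_s)_{s ∈ κ^{<ℕ}} indexed by finite sequences of ordinals below κ, with ν(x_s) = 1/2 for all s and ν(x_s ∧ x_t) = 1/4 for s ≠ t. For f : ℕ → κ, let x_f in the ultrapower B^U (U a nonprincipal ultrafilter on ℕ) be represented by the sequence (x_{f↾n})_{n∈ℕ}. Then for f ≠ g, the measure of x_f ∧ x_g in B^U equals 1/4, while each x_f has measure 1/2; in particular the map f ↦ x_f is injective, yielding a family of κ^{ℵ₀} elements of B^U that are pairwise 'independent' in the sense that ν(x_f ∧ x_g) = ν(x_f)·ν(x_g). -/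
open Filter

/- Proof idea: if `f ≠ g` then the restrictions `f↾n` and `g↾n` differ for all large `n`, so
along the nonprincipal ultrafilter `U` the representatives of `x_f ⊓ x_g` are eventually
`x_s ⊓ x_t` with `s ≠ t`, of measure `1/4`. Additivity gives
`ν(a Δ b) = ν a + ν b - 2 ν(a ⊓ b)`, so the distance between the representatives of `x_f` and
`x_g` is eventually `1/2`, not tending to `0`. -/

theorem List.ofFn_restrict_ne_of_lt {α : Type*} {f g : ℕ → α} {k n : ℕ} (hk : f k ≠ g k)
    (hkn : k < n) : List.ofFn (fun i : Fin n => f i) ≠ List.ofFn (fun i : Fin n => g i) := by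
  intro h
  have := congrArg (fun l => l[k]?) h
  simp [hkn, hk] at this

theorem eventually_ofFn_restrict_ne {α : Type*} {f g : ℕ → α} (hfg : f ≠ g) :
    ∀ᶠ n in cofinite, List.ofFn (fun i : Fin n => f i) ≠ List.ofFn (fun i : Fin n => g i) := by
  obtain ⟨k, hk⟩ := Function.ne_iff.mp hfg
  rw [Nat.cofinite_eq_atTop]
  exact eventually_atTop.mpr ⟨k + 1, fun n hn => List.ofFn_restrict_ne_of_lt hk hn⟩

theorem apply_symmDiff_eq_of_additive {B : Type*} [GeneralizedBooleanAlgebra B] {ν : B → ℝ}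
    (hadd : ∀ a b : B, Disjoint a b → ν (a ⊔ b) = ν a + ν b) (a b : B) :
    ν (symmDiff a b) = ν a + ν b - 2 * ν (a ⊓ b) := by
  have hsplit : ∀ u v : B, ν u = ν (u ⊓ v) + ν (u \ v) := fun u v => by
    rw [← hadd _ _ (disjoint_sdiff_self_right.mono_left inf_le_right), sup_inf_sdiff]
  have ha := hsplit a b
  have hb := hsplit b a
  rw [symmDiff_def, hadd _ _ disjoint_sdiff_sdiff, inf_comm b a] at *
  linarith

theorem stmt13_general {B : Type*} [BooleanAlgebra B] (ν : B → ℝ)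
    (hadd : ∀ a b : B, Disjoint a b → ν (a ⊔ b) = ν a + ν b)
    {κ : Type*} (x : List κ → B)
    (hhalf : ∀ s, ν (x s) = 1/2)
    (hindep : ∀ s t, s ≠ t → ν (x s ⊓ x t) = 1/4)
    (U : Ultrafilter ℕ) (hU : (U : Filter ℕ) ≤ Filter.cofinite) :
    (∀ f : ℕ → κ, Tendsto (fun n => ν (x (List.ofFn (fun i : Fin n => f i))))
        (U : Filter ℕ) (nhds (1/2))) ∧
    (∀ f g : ℕ → κ, f ≠ g →
      Tendsto (fun n => ν (x (List.ofFn (fun i : Fin n => f i)) ⊓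
          x (List.ofFn (fun i : Fin n => g i)))) (U : Filter ℕ) (nhds (1/4))) ∧
    (∀ f g : ℕ → κ, f ≠ g →
      ¬ Tendsto (fun n => ν (symmDiff (x (List.ofFn (fun i : Fin n => f i)))
          (x (List.ofFn (fun i : Fin n => g i))))) (U : Filter ℕ) (nhds 0)) := by
  refine ⟨fun f => by simp only [hhalf]; exact tendsto_const_nhds, fun f g hfg => ?_,
    fun f g hfg htend => ?_⟩
  · exact tendsto_const_nhds.congr'
      (((eventually_ofFn_restrict_ne hfg).filter_mono hU).mono fun n hn => (hindep _ _ hn).symm)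
  · have hdist : ∀ᶠ n in (U : Filter ℕ), ν (symmDiff (x (List.ofFn (fun i : Fin n => f i)))
        (x (List.ofFn (fun i : Fin n => g i)))) = 1/2 :=
      ((eventually_ofFn_restrict_ne hfg).filter_mono hU).mono fun n hn => by
        rw [apply_symmDiff_eq_of_additive hadd, hhalf, hhalf, hindep _ _ hn]; norm_num
    have := tendsto_nhds_unique (htend.congr' hdist) tendsto_const_nhds
    norm_num at this

/-- Given a stochastically independent family `(x_s)` in a probability measure algebra
`(B, ν)` indexed by finite sequences from `κ` (`ν(x_s) = 1/2`, `ν(x_s ⊓ x_t) = 1/4` for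
`s ≠ t`), the elements `x_f` of the metric ultrapower `B^U` represented by
`(x_{f↾n})_n`, for `f : ℕ → κ`, satisfy: each `x_f` has measure `1/2`, for `f ≠ g` the
measure of `x_f ⊓ x_g` is `1/4 = ν(x_f)·ν(x_g)`, and `f ↦ x_f` is injective (the distance
`ν(x_{f↾n} Δ x_{g↾n})` does not tend to `0` along `U`). -/
theorem stmt13 {B : Type*} [BooleanAlgebra B] (ν : B → ℝ)
    (hmono : Monotone ν) (hν1 : ν ⊤ = 1) (hν0 : ν ⊥ = 0)
    (hadd : ∀ a b : B, Disjoint a b → ν (a ⊔ b) = ν a + ν b)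
    (hpos : ∀ a : B, a ≠ ⊥ → 0 < ν a)
    {κ : Type*} (x : List κ → B)
    (hhalf : ∀ s, ν (x s) = 1/2)
    (hindep : ∀ s t, s ≠ t → ν (x s ⊓ x t) = 1/4)
    (U : Ultrafilter ℕ) (hU : (U : Filter ℕ) ≤ Filter.cofinite) :
    (∀ f : ℕ → κ, Tendsto (fun n => ν (x (List.ofFn (fun i : Fin n => f i))))
        (U : Filter ℕ) (nhds (1/2))) ∧
    (∀ f g : ℕ → κ, f ≠ g →
      Tendsto (fun n => ν (x (List.ofFn (fun i : Fin n => f i)) ⊓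
          x (List.ofFn (fun i : Fin n => g i)))) (U : Filter ℕ) (nhds (1/4))) ∧
    (∀ f g : ℕ → κ, f ≠ g →
      ¬ Tendsto (fun n => ν (symmDiff (x (List.ofFn (fun i : Fin n => f i)))
          (x (List.ofFn (fun i : Fin n => g i))))) (U : Filter ℕ) (nhds 0)) :=
  stmt13_general ν hadd x hhalf hindep U hU
end

section
/- Let (M, τ) be a tracial von Neumann algebra, U a free ultrafilter on ℕ, and suppose the center-valued trace T : M → Z(M) satisfies ‖x − T(x)‖₂ ≤ sup_{‖y‖≤1} ‖[x,y]‖₂ for all x ∈ M. Then the center of the ultrapower equals the ultrapower of the center: Z(M^U) = Z(M)^U (as subalgebras of M^U). -/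
/-!
If `(x_i)` asymptotically commutes with every bounded sequence, pick `y_i` with `‖y_i‖ ≤ 1`
nearly attaining the supremum in the hypothesis on `T`; then `‖x_i - T x_i‖₂` is eventually
below any `ε`, so `c_i = T x_i` works. Conversely `[x_i, y_i] = [x_i - c_i, y_i]` for central
`c_i`, and `‖ab‖₂ ≤ ‖a‖ ‖b‖₂`, `‖ab‖₂ ≤ ‖a‖₂ ‖b‖` (the second from the first via the trace
property and `‖a*‖₂ = ‖a‖₂`) give `‖[x_i, y_i]‖₂ ≤ 2 ‖x_i - c_i‖₂`.
-/

open Filter Topology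

namespace TracialL2

variable {M : Type*}

section Ring

variable [Ring M] [StarRing M] [Algebra ℂ M] (τ : M →ₗ[ℂ] ℂ)

/-- The `‖a‖₂` of the paper. -/
noncomputable def l2Norm (a : M) : ℝ := √(τ (star a * a)).re

theorem l2Norm_nonneg (a : M) : 0 ≤ l2Norm τ a := Real.sqrt_nonneg _

theorem l2Norm_neg (a : M) : l2Norm τ (-a) = l2Norm τ a := by
  simp [l2Norm]

theorem l2Norm_star (htr : ∀ a b : M, τ (a * b) = τ (b * a)) (a : M) :
    l2Norm τ (star a) = l2Norm τ a := by
  rw [l2Norm, l2Norm, star_star, htr]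

variable [StarModule ℂ M]

theorem re_map_star_add_smul_mul_add_smul (u v : M) (t : ℝ) :
    (τ (star (u + (t : ℂ) • v) * (u + (t : ℂ) • v))).re =
      (τ (star u * u)).re + t * ((τ (star u * v)).re + (τ (star v * u)).re) +
        t * t * (τ (star v * v)).re := by
  have hexp : star (u + (t : ℂ) • v) * (u + (t : ℂ) • v) =
      star u * u + (t : ℂ) • (star u * v) + (t : ℂ) • (star v * u)
        + ((t * t : ℝ) : ℂ) • (star v * v) := by
    rw [star_add, star_smul, Complex.star_def, Complex.conj_ofReal, add_mul, mul_add, mul_add,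
      smul_mul_assoc, smul_mul_assoc, mul_smul_comm, mul_smul_comm, smul_smul, Complex.ofReal_mul]
    abel
  simp only [hexp, map_add, map_smul, smul_eq_mul, Complex.add_re, Complex.re_ofReal_mul]
  ring

variable {τ}

/-- Cauchy–Schwarz; only real parts appear since `τ` is not assumed to be hermitian. -/
theorem re_add_re_le_two_mul_l2Norm (hpos : ∀ a : M, 0 ≤ (τ (star a * a)).re) (u v : M) :
    (τ (star u * v)).re + (τ (star v * u)).re ≤ 2 * l2Norm τ u * l2Norm τ v := by
  set s := (τ (star u * v)).re + (τ (star v * u)).re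
  have hdisc : discrim (τ (star v * v)).re s (τ (star u * u)).re ≤ 0 := by
    refine discrim_le_zero fun t => ?_
    have := hpos (u + (t : ℂ) • v)
    rw [re_map_star_add_smul_mul_add_smul] at this
    linarith
  have hsq : s ^ 2 ≤ (2 * l2Norm τ u * l2Norm τ v) ^ 2 := by
    rw [discrim] at hdisc
    rw [mul_pow, mul_pow, l2Norm, l2Norm, Real.sq_sqrt (hpos u), Real.sq_sqrt (hpos v)]
    linarith
  exact le_of_sq_le_sq hsq (by have := l2Norm_nonneg τ u; have := l2Norm_nonneg τ v; positivity)

theorem l2Norm_add_le (hpos : ∀ a : M, 0 ≤ (τ (star a * a)).re) (u v : M) :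
    l2Norm τ (u + v) ≤ l2Norm τ u + l2Norm τ v := by
  have hexp := re_map_star_add_smul_mul_add_smul τ u v 1
  simp only [Complex.ofReal_one, one_smul, one_mul] at hexp
  have hcs := re_add_re_le_two_mul_l2Norm hpos u v
  have hu := Real.sq_sqrt (hpos u)
  have hv := Real.sq_sqrt (hpos v)
  have hsum := add_nonneg (l2Norm_nonneg τ u) (l2Norm_nonneg τ v)
  simp only [l2Norm] at hcs hsum ⊢
  rw [Real.sqrt_le_left hsum, hexp]
  nlinarith

end Ring

section CStarAlgebra

variable [CStarAlgebra M] {τ : M →ₗ[ℂ] ℂ}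

theorem re_map_star_mul_mul_le (hpos : ∀ a : M, 0 ≤ (τ (star a * a)).re) (a b : M) :
    (τ (star (a * b) * (a * b))).re ≤ ‖a‖ ^ 2 * (τ (star b * b)).re := by
  let _ : PartialOrder M := CStarAlgebra.spectralOrder M
  have _ : StarOrderedRing M := CStarAlgebra.spectralOrderedRing M
  -- `‖a‖² - a⋆a` is positive, hence of the form `c⋆c`.
  obtain ⟨c, hc⟩ := CStarAlgebra.nonneg_iff_eq_star_mul_self.mp
    (sub_nonneg.mpr (CStarAlgebra.star_mul_le_algebraMap_norm_sq (a := a)))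
  have hexp : star (a * b) * (a * b) =
      ((‖a‖ ^ 2 : ℝ) : ℂ) • (star b * b) - star (c * b) * (c * b) := by
    rw [star_mul, star_mul, mul_assoc, ← mul_assoc (star a),
      ← sub_sub_self (algebraMap ℝ M _) (star a * a), hc]
    simp only [Algebra.algebraMap_eq_smul_one, Complex.coe_smul]
    noncomm_ring
  rw [hexp, map_sub, map_smul, smul_eq_mul, Complex.sub_re, Complex.re_ofReal_mul]
  linarith [hpos (c * b)]

theorem l2Norm_mul_le_left (hpos : ∀ a : M, 0 ≤ (τ (star a * a)).re) (a b : M) :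
    l2Norm τ (a * b) ≤ ‖a‖ * l2Norm τ b := by
  rw [l2Norm, l2Norm, ← Real.sqrt_sq (norm_nonneg a), ← Real.sqrt_mul (sq_nonneg _)]
  exact Real.sqrt_le_sqrt (re_map_star_mul_mul_le hpos a b)

theorem l2Norm_mul_le_right (hpos : ∀ a : M, 0 ≤ (τ (star a * a)).re)
    (htr : ∀ a b : M, τ (a * b) = τ (b * a)) (a b : M) :
    l2Norm τ (a * b) ≤ l2Norm τ a * ‖b‖ := by
  rw [← l2Norm_star τ htr, star_mul, ← l2Norm_star τ htr a, ← norm_star b, mul_comm]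
  exact l2Norm_mul_le_left hpos _ _

theorem l2Norm_commutator_le_of_commute (hpos : ∀ a : M, 0 ≤ (τ (star a * a)).re)
    (htr : ∀ a b : M, τ (a * b) = τ (b * a)) {c y : M} (hcy : Commute c y) (x : M) :
    l2Norm τ (x * y - y * x) ≤ 2 * ‖y‖ * l2Norm τ (x - c) := by
  have hcomm : x * y - y * x = (x - c) * y + -(y * (x - c)) := by
    rw [sub_mul, mul_sub, hcy.eq]; abel
  calc l2Norm τ (x * y - y * x)
      ≤ l2Norm τ ((x - c) * y) + l2Norm τ (y * (x - c)) := by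
        rw [hcomm, ← l2Norm_neg τ (y * (x - c))]; exact l2Norm_add_le hpos _ _
    _ ≤ l2Norm τ (x - c) * ‖y‖ + ‖y‖ * l2Norm τ (x - c) :=
        add_le_add (l2Norm_mul_le_right hpos htr _ _) (l2Norm_mul_le_left hpos _ _)
    _ = 2 * ‖y‖ * l2Norm τ (x - c) := by ring

theorem tendsto_l2Norm_commutator_of_tendsto_l2Norm_sub_central
    (hpos : ∀ a : M, 0 ≤ (τ (star a * a)).re) (htr : ∀ a b : M, τ (a * b) = τ (b * a))
    {ι : Type*} {l : Filter ι} {x c y : ι → M} (hc : ∀ i a, c i * a = a * c i)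
    (hxc : Tendsto (fun i => l2Norm τ (x i - c i)) l (𝓝 0)) (hy : ∀ i, ‖y i‖ ≤ 1) :
    Tendsto (fun i => l2Norm τ (x i * y i - y i * x i)) l (𝓝 0) := by
  refine squeeze_zero (fun i => l2Norm_nonneg τ _) (fun i => ?_) (by simpa using hxc.const_mul 2)
  calc l2Norm τ (x i * y i - y i * x i) ≤ 2 * ‖y i‖ * l2Norm τ (x i - c i) :=
        l2Norm_commutator_le_of_commute hpos htr (hc i (y i)) (x i)
    _ ≤ 2 * 1 * l2Norm τ (x i - c i) := by gcongr; exacts [l2Norm_nonneg τ _, hy i]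
    _ = 2 * l2Norm τ (x i - c i) := by ring

end CStarAlgebra

variable [NormedRing M] [StarRing M] [NormedAlgebra ℂ M] {τ : M →ₗ[ℂ] ℂ}

theorem tendsto_l2Norm_sub_of_tendsto_l2Norm_commutator {T : M → M}
    (hT : ∀ x : M, l2Norm τ (x - T x) ≤
      sSup {r : ℝ | ∃ y : M, ‖y‖ ≤ 1 ∧ r = l2Norm τ (x * y - y * x)})
    {ι : Type*} {l : Filter ι} {x : ι → M}
    (hx : ∀ y : ι → M, (∀ i, ‖y i‖ ≤ 1) →
      Tendsto (fun i => l2Norm τ (x i * y i - y i * x i)) l (𝓝 0)) :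
    Tendsto (fun i => l2Norm τ (x i - T (x i))) l (𝓝 0) := by
  refine tendsto_order.2 ⟨fun a ha => .of_forall fun i => ha.trans_le (l2Norm_nonneg τ _),
    fun ε hε => ?_⟩
  have hnear : ∀ i, ∃ y : M, ‖y‖ ≤ 1 ∧
      l2Norm τ (x i - T (x i)) < l2Norm τ (x i * y - y * x i) + ε / 2 := by
    intro i
    obtain ⟨_, ⟨y, hy, rfl⟩, hlt⟩ := Real.add_neg_lt_sSup
      (s := {r : ℝ | ∃ y : M, ‖y‖ ≤ 1 ∧ r = l2Norm τ (x i * y - y * x i)})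
      ⟨_, 0, by simp, rfl⟩ (neg_lt_zero.2 (half_pos hε))
    exact ⟨y, hy, by linarith [hT (x i)]⟩
  choose y hy hxy using hnear
  filter_upwards [(tendsto_order.1 (hx y hy)).2 _ (half_pos hε)] with i hi
  linarith [hxy i]

end TracialL2

open TracialL2

theorem stmt15_general {M : Type*} [NormedRing M] [StarRing M] [CStarRing M] [NormedAlgebra ℂ M]
    [StarModule ℂ M] [CompleteSpace M]
    (τ : M →ₗ[ℂ] ℂ)
    (htr : ∀ a b : M, τ (a * b) = τ (b * a))
    (hpos : ∀ a : M, 0 ≤ (τ (star a * a)).re)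
    (n2 : M → ℝ) (hn2 : ∀ a, n2 a = Real.sqrt ((τ (star a * a)).re))
    (T : M → M)
    (hTcentral : ∀ x : M, ∀ y : M, T x * y = y * T x)
    (hTbound : ∀ x : M, ‖T x‖ ≤ ‖x‖)
    (hTineq : ∀ x : M,
      n2 (x - T x) ≤ sSup {r : ℝ | ∃ y : M, ‖y‖ ≤ 1 ∧ r = n2 (x * y - y * x)})
    (U : Ultrafilter ℕ) :
    ∀ x : ℕ → M, (∀ i, ‖x i‖ ≤ 1) →
      ((∀ y : ℕ → M, (∀ i, ‖y i‖ ≤ 1) →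
          Tendsto (fun i => n2 (x i * y i - y i * x i)) (U : Filter ℕ) (nhds 0)) ↔
        ∃ c : ℕ → M, (∀ i, ∀ a : M, c i * a = a * c i) ∧ (∀ i, ‖c i‖ ≤ 1) ∧
          Tendsto (fun i => n2 (x i - c i)) (U : Filter ℕ) (nhds 0)) := by
  obtain rfl : n2 = l2Norm τ := funext hn2
  let _ : CStarAlgebra M := {}
  intro x hx
  constructor
  · intro hcomm
    exact ⟨fun i => T (x i), fun i => hTcentral (x i), fun i => (hTbound (x i)).trans (hx i),
      tendsto_l2Norm_sub_of_tendsto_l2Norm_commutator hTineq hcomm⟩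
  · rintro ⟨c, hc, -, hxc⟩ y hy
    exact tendsto_l2Norm_commutator_of_tendsto_l2Norm_sub_central hpos htr hc hxc hy

/-- If the center-valued trace `T` of a tracial von Neumann algebra `(M, τ)` satisfies
`‖x − T(x)‖₂ ≤ sup_{‖y‖≤1} ‖[x,y]‖₂`, then the center of the tracial ultrapower equals the
ultrapower of the center. In terms of representing sequences: a bounded sequence `(x_i)`
is central in `M^U` (commutes asymptotically with every bounded sequence) iff it agrees
along `U` with a sequence of central elements of `M`. -/
theorem stmt15 {M : Type*} [NormedRing M] [StarRing M] [CStarRing M] [NormedAlgebra ℂ M]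
    [StarModule ℂ M] [CompleteSpace M]
    (τ : M →ₗ[ℂ] ℂ)
    (htr : ∀ a b : M, τ (a * b) = τ (b * a))
    (hpos : ∀ a : M, 0 ≤ (τ (star a * a)).re)
    (hfaith : ∀ a : M, τ (star a * a) = 0 → a = 0) (hτ1 : τ 1 = 1)
    (n2 : M → ℝ) (hn2 : ∀ a, n2 a = Real.sqrt ((τ (star a * a)).re))
    (T : M → M)
    (hTcentral : ∀ x : M, ∀ y : M, T x * y = y * T x)
    (hTbound : ∀ x : M, ‖T x‖ ≤ ‖x‖)
    (hTineq : ∀ x : M,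
      n2 (x - T x) ≤ sSup {r : ℝ | ∃ y : M, ‖y‖ ≤ 1 ∧ r = n2 (x * y - y * x)})
    (U : Ultrafilter ℕ) (hU : (U : Filter ℕ) ≤ Filter.cofinite) :
    ∀ x : ℕ → M, (∀ i, ‖x i‖ ≤ 1) →
      ((∀ y : ℕ → M, (∀ i, ‖y i‖ ≤ 1) →
          Tendsto (fun i => n2 (x i * y i - y i * x i)) (U : Filter ℕ) (nhds 0)) ↔
        ∃ c : ℕ → M, (∀ i, ∀ a : M, c i * a = a * c i) ∧ (∀ i, ‖c i‖ ≤ 1) ∧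
          Tendsto (fun i => n2 (x i - c i)) (U : Filter ℕ) (nhds 0)) :=
  stmt15_general τ htr hpos n2 hn2 T hTcentral hTbound hTineq U
end

section
/- Let U be a nonprincipal ultrafilter on ℕ and κ(U) the coinitiality of ℕ^↗ℕ/U (the minimal cardinality of X ⊆ ℕ^↗ℕ such that for every g ∈ ℕ^↗ℕ there is f ∈ X with {n : f(n) ≤ g(n)} ∈ U). Then κ(U) is uncountable: no countable X ⊆ ℕ^↗ℕ is coinitial in ℕ^↗ℕ/U. -/
/-!
Choose thresholds `b m` such that `f j n > m` for all `j ≤ m` and `n ≥ b m`, and let `g n` be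
the largest `m ≤ n` with `b m ≤ n`. Then `g` is nondecreasing and unbounded, and once
`g n ≥ k` we get `f k n > g n`, because `n ≥ b (g n)`. So each `{n | g n < f k n}` is cofinite, hence in `U`, and
its complement `{n | f k n ≤ g n}` is not.
-/

open Filter

def thresholdIndex (b : ℕ → ℕ) (n : ℕ) : ℕ :=
  Nat.findGreatest (fun m => b m ≤ n) n

namespace thresholdIndex

variable (b : ℕ → ℕ)

theorem monotone : Monotone (thresholdIndex b) := fun _ _ hac =>
  Nat.findGreatest_mono (fun _ hm => hm.trans hac) hac

theorem le_of_threshold_le {m n : ℕ} (hmn : m ≤ n) (hbm : b m ≤ n) : m ≤ thresholdIndex b n :=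
  Nat.le_findGreatest hmn hbm

theorem threshold_le {m n : ℕ} (hmn : m ≤ n) (hbm : b m ≤ n) : b (thresholdIndex b n) ≤ n :=
  Nat.findGreatest_spec (P := fun m => b m ≤ n) hmn hbm

theorem tendsto_atTop : Tendsto (thresholdIndex b) atTop atTop :=
  tendsto_atTop_atTop_of_monotone (monotone b) fun m =>
    ⟨max m (b m), le_of_threshold_le b (le_max_left _ _) (le_max_right _ _)⟩

end thresholdIndex

theorem exists_threshold_forall_le_lt {f : ℕ → ℕ → ℕ}
    (hf : ∀ k, Tendsto (f k) atTop atTop) (m : ℕ) :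
    ∃ b, ∀ n ≥ b, ∀ j ≤ m, m < f j n :=
  ((Set.finite_Iic m).eventually_all.2 fun j _ =>
    (hf j).eventually_gt_atTop m).exists_forall_of_atTop

theorem exists_monotone_tendsto_eventually_lt {f : ℕ → ℕ → ℕ}
    (hf : ∀ k, Tendsto (f k) atTop atTop) :
    ∃ g : ℕ → ℕ, Monotone g ∧ Tendsto g atTop atTop ∧ ∀ k, ∀ᶠ n in atTop, g n < f k n := by
  choose b hb using exists_threshold_forall_le_lt hf
  refine ⟨thresholdIndex b, thresholdIndex.monotone b, thresholdIndex.tendsto_atTop b,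
    fun k => ?_⟩
  filter_upwards [eventually_ge_atTop (max k (b k))] with n hn
  have hkn : k ≤ n := le_of_max_le_left hn
  have hbk : b k ≤ n := le_of_max_le_right hn
  exact hb _ n (thresholdIndex.threshold_le b hkn hbk) k
    (thresholdIndex.le_of_threshold_le b hkn hbk)

theorem stmt18_general (U : Ultrafilter ℕ) (hU : (U : Filter ℕ) ≤ Filter.cofinite)
    (f : ℕ → (ℕ → ℕ))
    (hinf : ∀ k, Tendsto (f k) atTop atTop) :
    ∃ g : ℕ → ℕ, Monotone g ∧ Tendsto g atTop atTop ∧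
      ∀ k, {n | f k n ≤ g n} ∉ U := by
  obtain ⟨g, hg_mono, hg_tendsto, hg_lt⟩ := exists_monotone_tendsto_eventually_lt hinf
  refine ⟨g, hg_mono, hg_tendsto, fun k => ?_⟩
  have hlt : {n | g n < f k n} ∈ U := hU (Nat.cofinite_eq_atTop ▸ hg_lt k)
  rw [← Ultrafilter.compl_mem_iff_notMem]
  simpa only [Set.compl_ofPred, not_le] using hlt

/-- `κ(U)` is uncountable for every nonprincipal ultrafilter `U` on `ℕ`: no countable
family in `ℕ^↗ℕ` (nondecreasing functions tending to `∞`) is coinitial in `ℕ^↗ℕ/U`. -/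
theorem stmt18 (U : Ultrafilter ℕ) (hU : (U : Filter ℕ) ≤ Filter.cofinite)
    (f : ℕ → (ℕ → ℕ))
    (hmono : ∀ k, Monotone (f k)) (hinf : ∀ k, Tendsto (f k) atTop atTop) :
    ∃ g : ℕ → ℕ, Monotone g ∧ Tendsto g atTop atTop ∧
      ∀ k, {n | f k n ≤ g n} ∉ U :=
  stmt18_general U hU f hinf
end
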